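/- For every c₀ ≥ 1 and every ε ∈ (0, 1) there exists a constant C > 0 (depending only on c₀ and ε) with the following property. Let τ ∈ ℝ, ξ > 0, q ∈ ℤ, K₁, K₂ ≥ 1, M₁, M₂ ≥ 1, and let I₁, I₂ be bounded intervals. Let B^{2,3} be the set of (ξ₁, q₁) ∈ ℝ×ℤ such that ξ₁ ∈ I₁, ξ − ξ₁ ∈ I₂, M₁ ≤ ξ₁ ≤ 2M₁, M₂ ≤ ξ − ξ₁ ≤ 2M₂, ⟨τ − ξ³ + q²/ξ + 3 ξ ξ₁ (ξ − ξ₁) + (ξ q₁ − ξ₁ q)²/(ξ ξ₁ (ξ − ξ₁))⟩ ≤ c₀ (K₁∨K₂), and |q₁/ξ₁ − (q − q₁)/(ξ − ξ₁)| ≥ max(1, (K₁∨K₂)^{1/2}/(M₁∧M₂)^{1/2}, (M₁∨M₂)^{1/2}/(M₁∧M₂)^{1/2}). Then μ(B^{2,3}) ≤ C · [ (M₁∧M₂)^{1/2+ε/2} (M₁∨M₂)^{−1/2+ε/2} (K₁∨K₂) + |I₁|∧|I₂| ]. -/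

import Mathlib

open MeasureTheory Set
open scoped ENNReal

/-!
Fix `ξ₁ = u` and write `s = u (ξ - u)`, `D = ξ q₁ - u q`, `κ = c₀ (K₁ ∨ K₂)`. Multiplied by
`ξ s`, the modulation bound reads `|D² - s (ξ⁴ - τ ξ - q² - 3 ξ² s)| ≤ κ ξ s`, and transversality
reads `|D| ≥ d s`. So `|D|` lies in `[r, r + κ ξ s / r]` with `r ≥ z s`, where `z = d` or
`z² ≤ (ξ⁴ - τ ξ - q² - κ ξ) / s - 3 ξ²`, and at most `2 κ / z + 2` values of `q₁` survive.
Sorting the `u` into layers `z ≈ 2ʲ d`, the value `s ≤ 4 M₁ M₂` is confined to an interval of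
length `≲ M₁ M₂ 4ʲ d² / (3 ξ² + 4ʲ d²)`, and `u ↦ u (ξ - u)` pulls an interval of length `w`
back to a set of measure `≤ 2 √w`. Layer `j` thus contributes
`≲ κ √(M₁ M₂) / √(3 ξ² + 4ʲ d²) ≤ κ √(M₁ M₂) ξ^(ε-1) (2ʲ d)^(-ε)`, a geometric series in `j`,
and the choice of `d` together with `ξ ≥ M₁ ∨ M₂` turns the sum into the stated power. The
`+ 2` per fibre costs `2 (|I₁| ∧ |I₂|)`.
-/

/-- Japanese bracket `⟨x⟩ = (1+x²)^{1/2}`. -/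
noncomputable def jb (x : ℝ) : ℝ := Real.sqrt (1 + x ^ 2)

lemma ENNReal.natCast_toNat_eq_ofReal (x : ℤ) : ((x.toNat : ℕ) : ℝ≥0∞) = ENNReal.ofReal x := by
  rcases le_total 0 x with hx | hx
  · rw [← ENNReal.ofReal_natCast]; congr 1; exact_mod_cast Int.toNat_of_nonneg hx
  · rw [Int.toNat_of_nonpos hx, ENNReal.ofReal_of_nonpos (by exact_mod_cast hx), Nat.cast_zero]

lemma Int.count_setOf_mem_Icc_le (a b : ℝ) :
    Measure.count {n : ℤ | (n : ℝ) ∈ Icc a b} ≤ ENNReal.ofReal (b - a) + 1 := by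
  have hsub : {n : ℤ | (n : ℝ) ∈ Icc a b} ⊆ (Finset.Icc ⌈a⌉ ⌊b⌋ : Set ℤ) := fun n hn => by
    simpa [Int.ceil_le, Int.le_floor] using hn
  calc Measure.count {n : ℤ | (n : ℝ) ∈ Icc a b}
      ≤ ENNReal.ofReal ((⌊b⌋ + 1 - ⌈a⌉ : ℤ) : ℝ) := by
        grw [hsub, Measure.count_apply_finset, Int.card_Icc, ENNReal.natCast_toNat_eq_ofReal]
    _ ≤ ENNReal.ofReal (b - a + 1) := by
        gcongr; push_cast; linarith [Int.floor_le b, Int.le_ceil a]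
    _ ≤ ENNReal.ofReal (b - a) + 1 := by
        grw [ENNReal.ofReal_add_le, ENNReal.ofReal_one]

lemma Int.count_setOf_abs_sub_mem_Icc_le {ξ : ℝ} (hξ : 0 < ξ) (c r δ : ℝ) :
    Measure.count {n : ℤ | |ξ * n - c| ∈ Icc r (r + δ)} ≤ 2 * (ENNReal.ofReal (δ / ξ) + 1) := by
  have hsub : {n : ℤ | |ξ * n - c| ∈ Icc r (r + δ)} ⊆
      {n : ℤ | (n : ℝ) ∈ Icc ((c + r) / ξ) ((c + r) / ξ + δ / ξ)} ∪
        {n : ℤ | (n : ℝ) ∈ Icc ((c - r) / ξ - δ / ξ) ((c - r) / ξ)} := by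
    intro n ⟨hlo, hhi⟩
    simp only [mem_union, mem_ofPred_eq, mem_Icc, ← add_div, ← sub_div, div_le_iff₀ hξ,
      le_div_iff₀ hξ]
    rcases le_total 0 (ξ * n - c) with h | h
    · rw [abs_of_nonneg h] at hlo hhi; left; constructor <;> linarith
    · rw [abs_of_nonpos h] at hlo hhi; right; constructor <;> linarith
  calc _ ≤ _ := measure_mono hsub
    _ ≤ _ := measure_union_le _ _
    _ ≤ (ENNReal.ofReal (δ / ξ) + 1) + (ENNReal.ofReal (δ / ξ) + 1) := by
        gcongr
        · simpa using Int.count_setOf_mem_Icc_le ((c + r) / ξ) ((c + r) / ξ + δ / ξ)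
        · simpa using Int.count_setOf_mem_Icc_le ((c - r) / ξ - δ / ξ) ((c - r) / ξ)
    _ = _ := (two_mul _).symm

lemma Real.sqrt_sq_add_two_mul_le {r : ℝ} (hr : 0 < r) {h : ℝ} (hh : 0 ≤ h) :
    √(r ^ 2 + 2 * h) ≤ r + h / r := by
  rw [Real.sqrt_le_iff]
  refine ⟨by positivity, ?_⟩
  have : (r + h / r) ^ 2 = r ^ 2 + 2 * h + (h / r) ^ 2 := by field_simp; ring
  nlinarith [sq_nonneg (h / r)]

/-- `|D² - Y| ≤ h` and `ρ ≤ |D|` confine `|D|` to `[r, r + h / r]` with `r = max √(Y - h) ρ`. -/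
lemma Int.count_setOf_abs_sq_sub_le {ξ : ℝ} (hξ : 0 < ξ) (c : ℝ) {Y h ρ ζ : ℝ} (hh : 0 ≤ h)
    (hζ : 0 < ζ) (hζr : ζ ≤ max √(Y - h) ρ) :
    Measure.count {n : ℤ | |(ξ * n - c) ^ 2 - Y| ≤ h ∧ ρ ≤ |ξ * n - c|} ≤
      2 * (ENNReal.ofReal (h / (ξ * ζ)) + 1) := by
  set r := max √(Y - h) ρ
  have hr : 0 < r := hζ.trans_le hζr
  have hsub : {n : ℤ | |(ξ * n - c) ^ 2 - Y| ≤ h ∧ ρ ≤ |ξ * n - c|} ⊆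
      {n : ℤ | |ξ * n - c| ∈ Icc r (r + h / r)} := by
    rintro n ⟨hY, hρ⟩
    set D := ξ * n - c
    obtain ⟨hYlo, hYhi⟩ := abs_le.mp hY
    have hYr : Y - h ≤ r ^ 2 := by
      have := Real.sq_sqrt' (x := Y - h)
      nlinarith [le_max_left (√(Y - h)) ρ, Real.sqrt_nonneg (Y - h), le_max_left (Y - h) 0]
    refine ⟨max_le ?_ hρ, ?_⟩
    · rw [← Real.sqrt_sq_eq_abs]; exact Real.sqrt_le_sqrt (by linarith)
    · rw [← Real.sqrt_sq_eq_abs]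
      exact (Real.sqrt_le_sqrt (show D ^ 2 ≤ r ^ 2 + 2 * h by linarith)).trans
        (Real.sqrt_sq_add_two_mul_le hr hh)
  calc _ ≤ _ := measure_mono hsub
    _ ≤ _ := Int.count_setOf_abs_sub_mem_Icc_le hξ c r (h / r)
    _ ≤ _ := by
        rw [div_div, mul_comm r]
        gcongr

lemma Real.sqrt_le_sqrt_sub_add_sqrt (x : ℝ) {w : ℝ} (hw : 0 ≤ w) : √x ≤ √(x - w) + √w := by
  rcases le_total w x with hwx | hxw
  · calc √x = √((x - w) + w) := by ring_nf
      _ ≤ √(x - w) + √w := by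
        rw [Real.sqrt_le_iff]
        refine ⟨by positivity, ?_⟩
        nlinarith [Real.sq_sqrt (sub_nonneg.2 hwx), Real.sq_sqrt hw,
          mul_nonneg (Real.sqrt_nonneg (x - w)) (Real.sqrt_nonneg w)]
  · exact (Real.sqrt_le_sqrt hxw).trans (le_add_of_nonneg_left (Real.sqrt_nonneg _))

lemma Real.volume_setOf_abs_sub_mem_Icc_le (c α β : ℝ) :
    volume {x : ℝ | |x - c| ∈ Icc α β} ≤ 2 * ENNReal.ofReal (β - α) := by
  have hsub : {x : ℝ | |x - c| ∈ Icc α β} ⊆ Icc (c - β) (c - α) ∪ Icc (c + α) (c + β) := by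
    intro x ⟨hlo, hhi⟩
    rcases le_total 0 (x - c) with h | h
    · rw [abs_of_nonneg h] at hlo hhi; right; constructor <;> linarith
    · rw [abs_of_nonpos h] at hlo hhi; left; constructor <;> linarith
  calc _ ≤ _ := measure_mono hsub
    _ ≤ _ := measure_union_le _ _
    _ = 2 * ENNReal.ofReal (β - α) := by
        rw [Real.volume_Icc, Real.volume_Icc, two_mul]; ring_nf

lemma Real.volume_preimage_mul_sub_Ioc_le (ξ a b : ℝ) (hab : a ≤ b) :
    volume ((fun u : ℝ => u * (ξ - u)) ⁻¹' Ioc a b) ≤ ENNReal.ofReal (2 * √(b - a)) := by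
  have hsub : (fun u : ℝ => u * (ξ - u)) ⁻¹' Ioc a b ⊆
      {x | |x - ξ / 2| ∈ Icc (√(ξ ^ 2 / 4 - b)) (√(ξ ^ 2 / 4 - a))} := by
    intro u ⟨hlo, hhi⟩
    dsimp only at hlo hhi
    have hvertex : u * (ξ - u) = ξ ^ 2 / 4 - (u - ξ / 2) ^ 2 := by ring
    rw [hvertex] at hlo hhi
    rw [mem_ofPred_eq, ← Real.sqrt_sq_eq_abs]
    exact ⟨Real.sqrt_le_sqrt (by linarith), Real.sqrt_le_sqrt (by linarith)⟩
  calc _ ≤ _ := measure_mono hsub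
    _ ≤ _ := Real.volume_setOf_abs_sub_mem_Icc_le _ _ _
    _ ≤ 2 * ENNReal.ofReal √(b - a) := by
        gcongr
        have := Real.sqrt_le_sqrt_sub_add_sqrt (ξ ^ 2 / 4 - a) (sub_nonneg.2 hab)
        rw [show ξ ^ 2 / 4 - a - (b - a) = ξ ^ 2 / 4 - b by ring] at this
        linarith
    _ = _ := by rw [ENNReal.ofReal_mul zero_le_two, ENNReal.ofReal_ofNat]

lemma Real.volume_le_ofReal_min {I₁ I₂ T : Set ℝ} (ξ : ℝ) (h₁ : Bornology.IsBounded I₁)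
    (h₂ : Bornology.IsBounded I₂) (hT₁ : T ⊆ I₁) (hT₂ : T ⊆ (ξ - ·) ⁻¹' I₂) :
    volume T ≤ ENNReal.ofReal (min (volume I₁).toReal (volume I₂).toReal) := by
  rw [← ENNReal.toReal_min h₁.measure_lt_top.ne h₂.measure_lt_top.ne,
    ENNReal.ofReal_toReal (min_lt_of_left_lt h₁.measure_lt_top).ne]
  refine le_min (measure_mono hT₁) ((measure_mono hT₂).trans_eq ?_)
  exact MeasurePreserving.measure_preimage_equiv (f := MeasurableEquiv.subLeft ξ)
    (Measure.measurePreserving_sub_left volume ξ) I₂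

theorem MeasureTheory.Measure.prod_apply_le_of_fiber_le {α β : Type*} [MeasurableSpace α]
    [MeasurableSpace β] {μ : Measure α} {ν : Measure β} [SFinite ν] {E : Set (α × β)}
    (hE : MeasurableSet E) {S W₀ : Set α} {W : ℕ → Set α} (hS : MeasurableSet S)
    (hW₀ : MeasurableSet W₀) (hW : ∀ j, MeasurableSet (W j)) {a c₀ : ℝ≥0∞} {c : ℕ → ℝ≥0∞}
    (hfib : ∀ x, (Prod.mk x ⁻¹' E).Nonempty → x ∈ S ∧
      (x ∈ W₀ ∧ ν (Prod.mk x ⁻¹' E) ≤ c₀ + a ∨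
        ∃ j, x ∈ W j ∧ ν (Prod.mk x ⁻¹' E) ≤ c j + a)) :
    μ.prod ν E ≤ a * μ S + c₀ * μ W₀ + ∑' j, c j * μ (W j) := by
  have hpt : ∀ x, ν (Prod.mk x ⁻¹' E) ≤
      S.indicator (fun _ => a) x + W₀.indicator (fun _ => c₀) x +
        ∑' j, (W j).indicator (fun _ => c j) x := by
    intro x
    rcases (Prod.mk x ⁻¹' E).eq_empty_or_nonempty with hempty | hne
    · simp [hempty]
    obtain ⟨hxS, ⟨hx₀, hle⟩ | ⟨j, hxj, hle⟩⟩ := hfib x hne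
    · calc _ ≤ c₀ + a := hle
        _ ≤ _ := by
          rw [indicator_of_mem hxS, indicator_of_mem hx₀, add_comm c₀]
          exact le_self_add
    · calc _ ≤ c j + a := hle
        _ ≤ (W j).indicator (fun _ => c j) x + S.indicator (fun _ => a) x := by
          rw [indicator_of_mem hxS, indicator_of_mem hxj]
        _ ≤ _ := by
          rw [add_comm, add_assoc]
          gcongr
          exact (ENNReal.le_tsum j).trans le_add_self
  rw [Measure.prod_apply hE]
  refine (lintegral_mono hpt).trans_eq ?_
  have hmeas : Measurable fun x => S.indicator (fun _ => a) x + W₀.indicator (fun _ => c₀) x :=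
    (measurable_const.indicator hS).add (measurable_const.indicator hW₀)
  rw [lintegral_add_left hmeas, lintegral_add_left (measurable_const.indicator hS),
    lintegral_indicator_const hS, lintegral_indicator_const hW₀,
    lintegral_tsum fun j => (measurable_const.indicator (hW j)).aemeasurable]
  simp_rw [lintegral_indicator_const (hW _)]

lemma Real.rpow_one_sub_mul_rpow_le_max {x y ε : ℝ} (hx : 0 ≤ x) (hy : 0 ≤ y) (hε0 : 0 ≤ ε)
    (hε1 : ε ≤ 1) : x ^ (1 - ε) * y ^ ε ≤ max x y :=
  calc x ^ (1 - ε) * y ^ ε ≤ (1 - ε) * x + ε * y :=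
        Real.geom_mean_le_arith_mean2_weighted (by linarith) hε0 hx hy (by ring)
    _ ≤ (1 - ε) * max x y + ε * max x y := by gcongr <;> first | linarith | simp
    _ = max x y := by ring

lemma one_div_sqrt_le_geometric {ξ d ε : ℝ} (hξ : 0 < ξ) (hd : 0 < d) (hε0 : 0 < ε)
    (hε1 : ε ≤ 1) (j : ℕ) :
    1 / √(3 * ξ ^ 2 + (2 ^ j * d) ^ 2) ≤ ξ ^ (ε - 1) * d ^ (-ε) * ((2 : ℝ) ^ (-ε)) ^ j := by
  have hz : 0 < (2 : ℝ) ^ j * d := by positivity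
  have hmax : max ξ (2 ^ j * d) ≤ √(3 * ξ ^ 2 + (2 ^ j * d) ^ 2) :=
    max_le (Real.le_sqrt_of_sq_le (by nlinarith)) (Real.le_sqrt_of_sq_le (by nlinarith))
  have hinterp := (Real.rpow_one_sub_mul_rpow_le_max hξ.le hz.le hε0.le hε1).trans hmax
  have hrhs : ξ ^ (ε - 1) * d ^ (-ε) * ((2 : ℝ) ^ (-ε)) ^ j =
      1 / (ξ ^ (1 - ε) * (2 ^ j * d) ^ ε) := by
    rw [Real.rpow_pow_comm zero_le_two, Real.mul_rpow (by positivity) hd.le,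
      show ε - 1 = -(1 - ε) by ring, Real.rpow_neg hξ.le, Real.rpow_neg hd.le,
      Real.rpow_neg (by positivity)]
    field_simp
  rw [hrhs]
  gcongr

lemma tsum_ofReal_div_sqrt_le {ξ d ε A : ℝ} (hξ : 0 < ξ) (hd : 0 < d) (hε0 : 0 < ε)
    (hε1 : ε ≤ 1) (hA : 0 ≤ A) :
    ∑' j : ℕ, ENNReal.ofReal (A / √(3 * ξ ^ 2 + (2 ^ j * d) ^ 2)) ≤
      ENNReal.ofReal (A * ξ ^ (ε - 1) * d ^ (-ε) / (1 - 2 ^ (-ε))) := by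
  have hρ0 : 0 ≤ (2 : ℝ) ^ (-ε) := by positivity
  have hρ1 : (2 : ℝ) ^ (-ε) < 1 := Real.rpow_lt_one_of_one_lt_of_neg one_lt_two (by linarith)
  calc ∑' j : ℕ, ENNReal.ofReal (A / √(3 * ξ ^ 2 + (2 ^ j * d) ^ 2))
      ≤ ∑' j : ℕ, ENNReal.ofReal (A * ξ ^ (ε - 1) * d ^ (-ε) * ((2 : ℝ) ^ (-ε)) ^ j) := by
        gcongr with j
        rw [mul_assoc, mul_assoc, div_eq_mul_one_div, ← mul_assoc (ξ ^ (ε - 1))]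
        exact mul_le_mul_of_nonneg_left (one_div_sqrt_le_geometric hξ hd hε0 hε1 j) hA
    _ = _ := by
        rw [← ENNReal.ofReal_tsum_of_nonneg (fun j => by positivity)
          ((summable_geometric_of_lt_one hρ0 hρ1).mul_left _), tsum_mul_left,
          tsum_geometric_of_lt_one hρ0 hρ1, div_eq_mul_inv]

/-- The first condition is `|τ - ω(u, n) - ω(ξ - u, q - n)| ≤ κ` with `ω(ξ, q) = ξ³ - q²/ξ`. -/
def NearResonant (τ ξ q κ d u n : ℝ) : Prop :=
  |τ - ξ ^ 3 + q ^ 2 / ξ + 3 * ξ * u * (ξ - u) + (ξ * n - u * q) ^ 2 / (ξ * u * (ξ - u))| ≤ κ ∧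
    d ≤ |n / u - (q - n) / (ξ - u)|

section NearResonant

variable {τ ξ q κ d u n : ℝ}

lemma resonance_mul_eq (hξ : ξ ≠ 0) (hu : u ≠ 0) (hv : ξ - u ≠ 0) :
    ξ * (u * (ξ - u)) * (τ - ξ ^ 3 + q ^ 2 / ξ + 3 * ξ * u * (ξ - u) +
      (ξ * n - u * q) ^ 2 / (ξ * u * (ξ - u))) =
      (ξ * n - u * q) ^ 2 - u * (ξ - u) * (ξ ^ 4 - τ * ξ - q ^ 2 - 3 * ξ ^ 2 * (u * (ξ - u))) := by
  field_simp
  ring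

lemma div_sub_div_eq_mul_sub_div (hu : u ≠ 0) (hv : ξ - u ≠ 0) :
    n / u - (q - n) / (ξ - u) = (ξ * n - u * q) / (u * (ξ - u)) := by
  field_simp
  ring

lemma NearResonant.abs_sq_sub_le (hξ : 0 < ξ) (hu : 0 < u) (hv : 0 < ξ - u)
    (h : NearResonant τ ξ q κ d u n) :
    |(ξ * n - u * q) ^ 2 - u * (ξ - u) * (ξ ^ 4 - τ * ξ - q ^ 2 - 3 * ξ ^ 2 * (u * (ξ - u)))| ≤
        κ * ξ * (u * (ξ - u)) ∧
      d * (u * (ξ - u)) ≤ |ξ * n - u * q| := by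
  have hs : 0 < u * (ξ - u) := mul_pos hu hv
  obtain ⟨hmod, hsep⟩ := h
  constructor
  · rw [← resonance_mul_eq hξ.ne' hu.ne' hv.ne', abs_mul, abs_of_pos (mul_pos hξ hs)]
    nlinarith [mul_pos hξ hs]
  · rwa [div_sub_div_eq_mul_sub_div hu.ne' hv.ne', abs_div, abs_of_pos hs, le_div_iff₀ hs] at hsep

lemma NearResonant.mul_le (hξ : 0 < ξ) (hu : 0 < u) (hv : 0 < ξ - u) (hd : 0 ≤ d)
    (h : NearResonant τ ξ q κ d u n) :
    (3 * ξ ^ 2 + d ^ 2) * (u * (ξ - u)) ≤ ξ ^ 4 - τ * ξ - q ^ 2 + κ * ξ := by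
  have hs : 0 < u * (ξ - u) := mul_pos hu hv
  obtain ⟨hmod, hsep⟩ := h.abs_sq_sub_le hξ hu hv
  have hsq : (d * (u * (ξ - u))) ^ 2 ≤ (ξ * n - u * q) ^ 2 := by
    simpa only [sq_abs] using pow_le_pow_left₀ (by positivity) hsep 2
  have := (abs_le.mp hmod).2
  nlinarith

/-- `z * u * (ξ - u)` bounds `|ξ n - u q|` from below, through transversality or through the
bottom of the modulation window. -/
theorem count_setOf_nearResonant_le (hξ : 0 < ξ) (hu : 0 < u) (hv : 0 < ξ - u) (hκ : 0 ≤ κ)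
    {z : ℝ} (hz : 0 < z)
    (hzd : z ≤ d ∨ (3 * ξ ^ 2 + z ^ 2) * (u * (ξ - u)) ≤ ξ ^ 4 - τ * ξ - q ^ 2 - κ * ξ) :
    Measure.count {n : ℤ | NearResonant τ ξ q κ d u n} ≤ 2 * (ENNReal.ofReal (κ / z) + 1) := by
  set s := u * (ξ - u)
  have hs : 0 < s := mul_pos hu hv
  have hζ : s * z ≤ max √(s * (ξ ^ 4 - τ * ξ - q ^ 2 - 3 * ξ ^ 2 * s) - κ * ξ * s) (d * s) := by
    rcases hzd with hzd | hzd
    · exact le_max_of_le_right (by rw [mul_comm]; gcongr)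
    · refine le_max_of_le_left (Real.le_sqrt_of_sq_le ?_)
      nlinarith
  calc Measure.count {n : ℤ | NearResonant τ ξ q κ d u n}
      ≤ Measure.count {n : ℤ | |(ξ * n - u * q) ^ 2 - s * (ξ ^ 4 - τ * ξ - q ^ 2 - 3 * ξ ^ 2 * s)|
          ≤ κ * ξ * s ∧ d * s ≤ |ξ * n - u * q|} :=
        measure_mono fun n hn => hn.abs_sq_sub_le hξ hu hv
    _ ≤ 2 * (ENNReal.ofReal (κ * ξ * s / (ξ * (s * z))) + 1) :=
        Int.count_setOf_abs_sq_sub_le hξ _ (by positivity) (by positivity) hζ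
    _ = 2 * (ENNReal.ofReal (κ / z) + 1) := by
        congr 3
        field_simp

end NearResonant

lemma exists_dyadic_layer {Θ a d s : ℝ} (hs : 0 < s) (hd : 0 < d) (h : (a + d ^ 2) * s ≤ Θ) :
    ∃ j : ℕ, (a + (2 ^ j * d) ^ 2) * s ≤ Θ ∧ Θ < (a + (2 ^ (j + 1) * d) ^ 2) * s := by
  have hds : 0 < d ^ 2 * s := by positivity
  have hsq (k : ℕ) : ((2 : ℝ) ^ k * d) ^ 2 = 4 ^ k * d ^ 2 := by
    rw [mul_pow, ← pow_mul, pow_mul']; norm_num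
  have hx : 1 ≤ (Θ - a * s) / (d ^ 2 * s) := by rw [le_div_iff₀ hds]; linarith
  obtain ⟨j, hlo, hhi⟩ := exists_nat_pow_near hx (by norm_num : (1 : ℝ) < 4)
  rw [le_div_iff₀ hds] at hlo
  rw [div_lt_iff₀ hds] at hhi
  exact ⟨j, by nlinarith [hsq j], by nlinarith [hsq (j + 1)]⟩

lemma Ioc_div_inter_Iic_subset {Θ t t' m : ℝ} (ht : 0 < t) (htt' : t ≤ t') :
    Ioc (Θ / t') (Θ / t) ∩ Iic m ⊆ Ioc (Θ / t') (Θ / t' + m * (t' - t) / t) := by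
  rintro s ⟨⟨hlo, hhi⟩, hm⟩
  have ht' : 0 < t' := ht.trans_le htt'
  refine ⟨hlo, ?_⟩
  calc s ≤ Θ / t := hhi
    _ = Θ / t' + Θ / t' * (t' - t) / t := by field_simp; ring
    _ ≤ Θ / t' + m * (t' - t) / t := by
        gcongr
        exact hlo.le.trans hm

lemma ENNReal.two_mul_ofReal_mul_ofReal {x y : ℝ} (hx : 0 ≤ x) :
    2 * ENNReal.ofReal x * ENNReal.ofReal y = ENNReal.ofReal (2 * x * y) := by
  rw [← ENNReal.ofReal_ofNat, ← ENNReal.ofReal_mul zero_le_two,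
    ← ENNReal.ofReal_mul (by positivity)]

def lowLayer (ξ Θ h d : ℝ) : Set ℝ :=
  (fun u => u * (ξ - u)) ⁻¹' Ioc (Θ / (3 * ξ ^ 2 + d ^ 2)) ((Θ + h) / (3 * ξ ^ 2 + d ^ 2))

def dyadicLayer (ξ Θ d m : ℝ) (j : ℕ) : Set ℝ :=
  (fun u => u * (ξ - u)) ⁻¹'
    (Ioc (Θ / (3 * ξ ^ 2 + (2 ^ (j + 1) * d) ^ 2)) (Θ / (3 * ξ ^ 2 + (2 ^ j * d) ^ 2)) ∩ Iic m)

section Layers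

variable {ξ Θ h d m : ℝ}

lemma measurableSet_lowLayer : MeasurableSet (lowLayer ξ Θ h d) :=
  (by fun_prop : Measurable fun u : ℝ => u * (ξ - u)) measurableSet_Ioc

lemma measurableSet_dyadicLayer (j : ℕ) : MeasurableSet (dyadicLayer ξ Θ d m j) :=
  (by fun_prop : Measurable fun u : ℝ => u * (ξ - u)) (measurableSet_Ioc.inter measurableSet_Iic)

lemma volume_lowLayer_le (hh : 0 ≤ h) :
    volume (lowLayer ξ Θ h d) ≤ ENNReal.ofReal (2 * √(h / (3 * ξ ^ 2 + d ^ 2))) := by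
  refine (Real.volume_preimage_mul_sub_Ioc_le _ _ _ (by gcongr; linarith)).trans_eq ?_
  rw [← sub_div, add_sub_cancel_left]

lemma volume_dyadicLayer_le (hd : 0 < d) (hm : 0 ≤ m) (j : ℕ) :
    volume (dyadicLayer ξ Θ d m j) ≤
      ENNReal.ofReal (2 * (2 ^ j * d) * √(3 * m / (3 * ξ ^ 2 + (2 ^ j * d) ^ 2))) := by
  set z := (2 : ℝ) ^ j * d
  set t := 3 * ξ ^ 2 + z ^ 2
  set t' := 3 * ξ ^ 2 + (2 ^ (j + 1) * d) ^ 2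
  have hz : 0 < z := by positivity
  have hdiff : t' - t = 3 * z ^ 2 := by simp only [t, t', z]; ring
  calc volume (dyadicLayer ξ Θ d m j)
      ≤ volume ((fun u => u * (ξ - u)) ⁻¹' Ioc (Θ / t') (Θ / t' + m * (t' - t) / t)) :=
        measure_mono (preimage_mono (Ioc_div_inter_Iic_subset (by positivity)
          (by linarith [sq_nonneg z])))
    _ ≤ ENNReal.ofReal (2 * √(m * (t' - t) / t)) := by
        grw [Real.volume_preimage_mul_sub_Ioc_le _ _ _
          (le_add_of_nonneg_right (by rw [hdiff]; positivity))]
        rw [add_sub_cancel_left]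
    _ = _ := by
        rw [hdiff, show m * (3 * z ^ 2) / t = z ^ 2 * (3 * m / t) by ring,
          Real.sqrt_mul (sq_nonneg z), Real.sqrt_sq hz.le, ← mul_assoc]

end Layers

lemma NearResonant.mem_layer {τ ξ q κ d m u n : ℝ} (hξ : 0 < ξ) (hu : 0 < u) (hv : 0 < ξ - u)
    (hκ : 0 ≤ κ) (hd : 0 < d) (hm : u * (ξ - u) ≤ m) (h : NearResonant τ ξ q κ d u n) :
    (u ∈ lowLayer ξ (ξ ^ 4 - τ * ξ - q ^ 2 - κ * ξ) (2 * κ * ξ) d ∧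
        Measure.count {n : ℤ | NearResonant τ ξ q κ d u n} ≤ 2 * ENNReal.ofReal (κ / d) + 2) ∨
      ∃ j, u ∈ dyadicLayer ξ (ξ ^ 4 - τ * ξ - q ^ 2 - κ * ξ) d m j ∧
        Measure.count {n : ℤ | NearResonant τ ξ q κ d u n} ≤
          2 * ENNReal.ofReal (κ / (2 ^ j * d)) + 2 := by
  set Θ := ξ ^ 4 - τ * ξ - q ^ 2 - κ * ξ
  have hs : 0 < u * (ξ - u) := mul_pos hu hv
  have ht (z : ℝ) : 0 < 3 * ξ ^ 2 + z ^ 2 := by positivity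
  have hsupp := h.mul_le hξ hu hv hd.le
  simp only [← mul_add_one]
  rcases lt_or_ge Θ ((3 * ξ ^ 2 + d ^ 2) * (u * (ξ - u))) with hlow | hhigh
  · refine Or.inl ⟨⟨by rwa [div_lt_iff₀ (ht d), mul_comm], ?_⟩,
      count_setOf_nearResonant_le hξ hu hv hκ hd (Or.inl le_rfl)⟩
    rw [le_div_iff₀ (ht d), mul_comm]
    linarith
  · obtain ⟨j, hj, hj'⟩ := exists_dyadic_layer hs hd hhigh
    refine Or.inr ⟨j, ⟨⟨?_, ?_⟩, hm⟩,
      count_setOf_nearResonant_le hξ hu hv hκ (by positivity) (Or.inr (by linarith))⟩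
    · rwa [div_lt_iff₀ (ht _), mul_comm]
    · rwa [le_div_iff₀ (ht _), mul_comm]

theorem volume_prod_count_nearResonant_le {τ ξ q κ d m : ℝ} (hξ : 0 < ξ) (hκ : 0 ≤ κ)
    (hd : 0 < d) (hm : 0 ≤ m) {S : Set ℝ} (hS : MeasurableSet S)
    (hSsub : ∀ u ∈ S, 0 < u ∧ 0 < ξ - u ∧ u * (ξ - u) ≤ m) :
    (volume.prod Measure.count) {p : ℝ × ℤ | p.1 ∈ S ∧ NearResonant τ ξ q κ d p.1 p.2} ≤
      2 * volume S + ENNReal.ofReal (4 * κ * (√(2 * κ * ξ / (3 * ξ ^ 2 + d ^ 2)) / d)) +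
        ∑' j : ℕ, ENNReal.ofReal (4 * κ * √(3 * m) / √(3 * ξ ^ 2 + (2 ^ j * d) ^ 2)) := by
  have hE : MeasurableSet {p : ℝ × ℤ | p.1 ∈ S ∧ NearResonant τ ξ q κ d p.1 p.2} := by
    unfold NearResonant; measurability
  refine (Measure.prod_apply_le_of_fiber_le hE hS measurableSet_lowLayer measurableSet_dyadicLayer
    (W₀ := lowLayer ξ (ξ ^ 4 - τ * ξ - q ^ 2 - κ * ξ) (2 * κ * ξ) d)
    (W := dyadicLayer ξ (ξ ^ 4 - τ * ξ - q ^ 2 - κ * ξ) d m) (a := 2)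
    (c₀ := 2 * ENNReal.ofReal (κ / d)) (c := fun j => 2 * ENNReal.ofReal (κ / (2 ^ j * d)))
    ?_).trans ?_
  · rintro u ⟨n, hu, hn⟩
    obtain ⟨hu0, hv0, hm⟩ := hSsub u hu
    refine ⟨hu, ?_⟩
    rcases hn.mem_layer hξ hu0 hv0 hκ hd hm with ⟨hW, hc⟩ | ⟨j, hW, hc⟩
    · exact Or.inl ⟨hW, (measure_mono fun n hn => hn.2).trans hc⟩
    · exact Or.inr ⟨j, hW, (measure_mono fun n hn => hn.2).trans hc⟩
  · gcongr with j
    · grw [volume_lowLayer_le (by positivity), ENNReal.two_mul_ofReal_mul_ofReal (by positivity)]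
      refine le_of_eq (congrArg _ ?_)
      ring
    · grw [volume_dyadicLayer_le hd hm, ENNReal.two_mul_ofReal_mul_ofReal (by positivity)]
      refine le_of_eq (congrArg _ ?_)
      rw [Real.sqrt_div' _ (by positivity)]
      field_simp
      ring

section Exponents

variable {a b ε : ℝ}

lemma sqrt_div_le_rpow (ha : 0 < a) (hb : 0 < b) (hab : 1 ≤ a * b) (hε : 0 ≤ ε) :
    √(a / b) ≤ a ^ ((1 : ℝ) / 2 + ε / 2) * b ^ (-(1 : ℝ) / 2 + ε / 2) := by
  have hsplit : a ^ ((1 : ℝ) / 2 + ε / 2) * b ^ (-(1 : ℝ) / 2 + ε / 2) =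
      √(a / b) * (a * b) ^ (ε / 2) := by
    rw [Real.rpow_add ha, Real.rpow_add hb, Real.mul_rpow ha.le hb.le, Real.sqrt_div' _ hb.le,
      Real.sqrt_eq_rpow, Real.sqrt_eq_rpow, neg_div, Real.rpow_neg hb.le]
    field_simp
  rw [hsplit]
  exact le_mul_of_one_le_right (Real.sqrt_nonneg _) (Real.one_le_rpow hab (by positivity))

lemma sqrt_mul_rpow_mul_rpow_le {ξ d : ℝ} (ha : 0 < a) (hb : 0 < b) (hd : 0 < d) (hbξ : b ≤ ξ)
    (hbd : b ≤ a * d ^ 2) (hε0 : 0 ≤ ε) (hε1 : ε ≤ 1) :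
    √(a * b) * ξ ^ (ε - 1) * d ^ (-ε) ≤ a ^ ((1 : ℝ) / 2 + ε / 2) * b ^ (-(1 : ℝ) / 2 + ε / 2) := by
  have hξd : ξ ^ (ε - 1) * d ^ (-ε) ≤ b ^ (ε - 1) * (b / a) ^ (-ε / 2) := by
    gcongr ?_ * ?_
    · exact Real.rpow_le_rpow_of_nonpos hb hbξ (by linarith)
    · rw [show d ^ (-ε) = (d ^ 2) ^ (-ε / 2) by
        rw [← Real.rpow_natCast, ← Real.rpow_mul hd.le]; congr 1; push_cast; ring]
      exact Real.rpow_le_rpow_of_nonpos (by positivity) (by rwa [div_le_iff₀ ha, mul_comm])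
        (by linarith)
  calc √(a * b) * ξ ^ (ε - 1) * d ^ (-ε) ≤ √(a * b) * (b ^ (ε - 1) * (b / a) ^ (-ε / 2)) := by
        rw [mul_assoc]; gcongr
    _ = _ := by
        rw [show (-(1 : ℝ) / 2 + ε / 2) = 1 / 2 + (ε - 1) + -(ε / 2) by ring, neg_div,
          Real.rpow_neg (div_nonneg hb.le ha.le), Real.div_rpow hb.le ha.le, Real.rpow_add ha,
          Real.rpow_add hb, Real.rpow_add hb, Real.rpow_neg hb.le, Real.sqrt_eq_rpow,
          Real.mul_rpow ha.le hb.le]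
        field_simp

end Exponents

lemma sqrt_div_div_le {c K ξ d a b : ℝ} (hc : 0 ≤ c) (ha : 0 < a) (hb : 0 < b) (hd : 0 < d)
    (hbξ : b ≤ ξ) (hKd : K ≤ a * d ^ 2) :
    √(2 * (c * K) * ξ / (3 * ξ ^ 2 + d ^ 2)) / d ≤ √(2 * c) * √(a / b) := by
  rw [← Real.sqrt_mul (by positivity), ← Real.sqrt_sq hd.le, ← Real.sqrt_div' _ (sq_nonneg d),
    Real.sqrt_sq hd.le]
  apply Real.sqrt_le_sqrt
  rw [div_div, mul_div_assoc', div_le_div_iff₀ (by positivity) hb]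
  have hξb : ξ * b ≤ 3 * ξ ^ 2 + d ^ 2 := by nlinarith
  calc 2 * (c * K) * ξ * b ≤ 2 * c * (a * d ^ 2) * (ξ * b) := by
        have := mul_nonneg hc (mul_nonneg (hb.le.trans hbξ) hb.le)
        nlinarith
    _ ≤ 2 * c * a * ((3 * ξ ^ 2 + d ^ 2) * d ^ 2) := by
        have := mul_nonneg (mul_nonneg hc ha.le) (sq_nonneg d)
        nlinarith

theorem volume_prod_count_nearResonant_le_rpow {τ ξ q c₀ K M₁ M₂ d ε : ℝ} (hξ : 0 < ξ)
    (hc₀ : 0 ≤ c₀) (hK : 0 ≤ K) (hM₁ : 1 ≤ M₁) (hM₂ : 1 ≤ M₂) (hd : 0 < d)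
    (hKd : K ≤ min M₁ M₂ * d ^ 2) (hMd : max M₁ M₂ ≤ min M₁ M₂ * d ^ 2) (hε0 : 0 < ε)
    (hε1 : ε ≤ 1) {S : Set ℝ} (hS : MeasurableSet S)
    (hSsub : ∀ u ∈ S, M₁ ≤ u ∧ u ≤ 2 * M₁ ∧ M₂ ≤ ξ - u ∧ ξ - u ≤ 2 * M₂) :
    (volume.prod Measure.count) {p : ℝ × ℤ | p.1 ∈ S ∧ NearResonant τ ξ q (c₀ * K) d p.1 p.2} ≤
      2 * volume S + ENNReal.ofReal ((4 * c₀ * √(2 * c₀) + 8 * √3 * c₀ / (1 - 2 ^ (-ε))) *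
        ((min M₁ M₂) ^ ((1 : ℝ) / 2 + ε / 2) * (max M₁ M₂) ^ (-(1 : ℝ) / 2 + ε / 2) * K)) := by
  set a := min M₁ M₂
  set b := max M₁ M₂
  set T := a ^ ((1 : ℝ) / 2 + ε / 2) * b ^ (-(1 : ℝ) / 2 + ε / 2)
  have ha : 0 < a := by positivity
  have hb : 0 < b := by positivity
  have hab : a * b = M₁ * M₂ := min_mul_max M₁ M₂
  rcases S.eq_empty_or_nonempty with rfl | ⟨u₀, hu₀⟩
  · simp
  have hbξ : b ≤ ξ := by
    obtain ⟨h₁, -, h₂, -⟩ := hSsub u₀ hu₀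
    exact max_le (by linarith) (by linarith)
  have hρ : 0 < 1 - (2 : ℝ) ^ (-ε) := by
    linarith [Real.rpow_lt_one_of_one_lt_of_neg one_lt_two (neg_neg_of_pos hε0)]
  have hSsub' : ∀ u ∈ S, 0 < u ∧ 0 < ξ - u ∧ u * (ξ - u) ≤ 4 * (a * b) := by
    intro u hu
    obtain ⟨h₁, h₂, h₃, h₄⟩ := hSsub u hu
    refine ⟨by linarith, by linarith, ?_⟩
    rw [hab]; nlinarith
  have hlow : 4 * (c₀ * K) * (√(2 * (c₀ * K) * ξ / (3 * ξ ^ 2 + d ^ 2)) / d) ≤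
      4 * c₀ * √(2 * c₀) * (T * K) := by
    have h : √(2 * (c₀ * K) * ξ / (3 * ξ ^ 2 + d ^ 2)) / d ≤ √(2 * c₀) * T :=
      (sqrt_div_div_le hc₀ ha hb hd hbξ hKd).trans (mul_le_mul_of_nonneg_left
        (sqrt_div_le_rpow ha hb (by nlinarith) hε0.le) (Real.sqrt_nonneg _))
    linear_combination (4 * (c₀ * K)) * h
  have hhigh : 4 * (c₀ * K) * √(3 * (4 * (a * b))) * ξ ^ (ε - 1) * d ^ (-ε) / (1 - 2 ^ (-ε)) ≤
      8 * √3 * c₀ / (1 - 2 ^ (-ε)) * (T * K) := by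
    have h : √(a * b) * ξ ^ (ε - 1) * d ^ (-ε) ≤ T :=
      sqrt_mul_rpow_mul_rpow_le ha hb hd hbξ hMd hε0.le hε1
    rw [show (3 : ℝ) * (4 * (a * b)) = 2 ^ 2 * 3 * (a * b) by ring, Real.sqrt_mul (by positivity),
      Real.sqrt_mul (by positivity), Real.sqrt_sq zero_le_two, div_mul_eq_mul_div,
      div_le_div_iff_of_pos_right hρ]
    linear_combination (8 * √3 * c₀ * K) * h
  calc _ ≤ _ := volume_prod_count_nearResonant_le hξ (by positivity) hd (by positivity) hS hSsub'
    _ ≤ _ := by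
        grw [tsum_ofReal_div_sqrt_le hξ hd hε0 hε1 (by positivity), add_assoc,
          ← ENNReal.ofReal_add (by positivity) (div_nonneg (by positivity) hρ.le)]
        gcongr
        rw [add_mul]
        exact add_le_add hlow hhigh

lemma abs_le_jb (x : ℝ) : |x| ≤ jb x := by
  rw [← Real.sqrt_sq_eq_abs]
  exact Real.sqrt_le_sqrt (by linarith)

lemma le_mul_sq_of_rpow_div_le {x y d : ℝ} (hx : 0 ≤ x) (hy : 0 < y)
    (h : x ^ ((1 : ℝ) / 2) / y ^ ((1 : ℝ) / 2) ≤ d) : x ≤ y * d ^ 2 := by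
  rw [← Real.sqrt_eq_rpow, ← Real.sqrt_eq_rpow, ← Real.sqrt_div hx, Real.sqrt_le_iff,
    div_le_iff₀ hy, mul_comm] at h
  exact h.2

lemma ENNReal.two_mul_add_ofReal_mul_le {V : ℝ≥0∞} {m C X : ℝ} (hV : V ≤ ENNReal.ofReal m)
    (hm : 0 ≤ m) (hC : 0 ≤ C) (hX : 0 ≤ X) :
    2 * V + ENNReal.ofReal (C * X) ≤ ENNReal.ofReal ((2 + C) * (X + m)) := by
  grw [hV, ← ENNReal.ofReal_ofNat, ← ENNReal.ofReal_mul zero_le_two,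
    ← ENNReal.ofReal_add (by positivity) (by positivity)]
  gcongr
  nlinarith [mul_nonneg hC hm]

/-- size estimate for the region `B^{2,3}` (Lemma 2.6). -/
theorem measure_B23_le (c₀ : ℝ) (hc₀ : 1 ≤ c₀) (ε : ℝ) (hε0 : 0 < ε) (hε1 : ε < 1) :
    ∃ C : ℝ, 0 < C ∧
      ∀ (τ ξ : ℝ) (q : ℤ) (K₁ K₂ M₁ M₂ : ℝ) (I₁ I₂ : Set ℝ),
        0 < ξ → 1 ≤ K₁ → 1 ≤ K₂ → 1 ≤ M₁ → 1 ≤ M₂ →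
        I₁.OrdConnected → Bornology.IsBounded I₁ →
        I₂.OrdConnected → Bornology.IsBounded I₂ →
        ((volume : Measure ℝ).prod Measure.count)
            {p : ℝ × ℤ | p.1 ∈ I₁ ∧ ξ - p.1 ∈ I₂ ∧
              M₁ ≤ p.1 ∧ p.1 ≤ 2 * M₁ ∧ M₂ ≤ ξ - p.1 ∧ ξ - p.1 ≤ 2 * M₂ ∧
              jb (τ - ξ ^ 3 + (q : ℝ) ^ 2 / ξ + 3 * ξ * p.1 * (ξ - p.1) +
                  (ξ * (p.2 : ℝ) - p.1 * (q : ℝ)) ^ 2 /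
                    (ξ * p.1 * (ξ - p.1))) ≤ c₀ * max K₁ K₂ ∧
              max (max 1 ((max K₁ K₂) ^ ((1 : ℝ) / 2) / (min M₁ M₂) ^ ((1 : ℝ) / 2)))
                  ((max M₁ M₂) ^ ((1 : ℝ) / 2) / (min M₁ M₂) ^ ((1 : ℝ) / 2)) ≤
                |(p.2 : ℝ) / p.1 - ((q : ℝ) - (p.2 : ℝ)) / (ξ - p.1)|} ≤
          ENNReal.ofReal
            (C * ((min M₁ M₂) ^ ((1 : ℝ) / 2 + ε / 2) *
                (max M₁ M₂) ^ (-(1 : ℝ) / 2 + ε / 2) * max K₁ K₂ +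
              min (volume I₁).toReal (volume I₂).toReal)) := by
  have hρ : 0 < 1 - (2 : ℝ) ^ (-ε) := by
    linarith [Real.rpow_lt_one_of_one_lt_of_neg one_lt_two (neg_neg_of_pos hε0)]
  refine ⟨2 + (4 * c₀ * √(2 * c₀) + 8 * √3 * c₀ / (1 - 2 ^ (-ε))), by positivity, ?_⟩
  intro τ ξ q K₁ K₂ M₁ M₂ I₁ I₂ hξ hK₁ hK₂ hM₁ hM₂ hI₁ hI₁b hI₂ hI₂b
  set d := max (max 1 ((max K₁ K₂) ^ ((1 : ℝ) / 2) / (min M₁ M₂) ^ ((1 : ℝ) / 2)))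
    ((max M₁ M₂) ^ ((1 : ℝ) / 2) / (min M₁ M₂) ^ ((1 : ℝ) / 2))
  set S : Set ℝ := {u | u ∈ I₁ ∧ ξ - u ∈ I₂ ∧ M₁ ≤ u ∧ u ≤ 2 * M₁ ∧ M₂ ≤ ξ - u ∧ ξ - u ≤ 2 * M₂}
  have hS : MeasurableSet S := by
    have := hI₁.measurableSet; have := hI₂.measurableSet; measurability
  have hmin : 0 < min M₁ M₂ := by positivity
  calc _ ≤ (volume.prod Measure.count)
        {p : ℝ × ℤ | p.1 ∈ S ∧ NearResonant τ ξ q (c₀ * max K₁ K₂) d p.1 p.2} :=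
        measure_mono <| by
          rintro p ⟨h₁, h₂, h₃, h₄, h₅, h₆, hmod, hsep⟩
          exact ⟨⟨h₁, h₂, h₃, h₄, h₅, h₆⟩, (abs_le_jb _).trans hmod, hsep⟩
    _ ≤ _ := volume_prod_count_nearResonant_le_rpow hξ (by positivity) (by positivity) hM₁ hM₂
          (by positivity)
          (le_mul_sq_of_rpow_div_le (by positivity) hmin (le_max_of_le_left (le_max_right _ _)))
          (le_mul_sq_of_rpow_div_le (by positivity) hmin (le_max_right _ _))
          hε0 hε1.le hS fun u hu => hu.2.2
    _ ≤ _ := ENNReal.two_mul_add_ofReal_mul_le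
          (Real.volume_le_ofReal_min ξ hI₁b hI₂b (fun u hu => hu.1) (fun u hu => hu.2.1))
          (by positivity) (by positivity) (by positivity)
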